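/- arXiv:1704.00451 — 2 statements merged into one kernel-verified Lean document; each statement's English description precedes it below -/
import Mathlib

section
/- Strict faithfulness implies uniqueness: let λ > 0 and u₀ ∈ BV(ℝⁿ). If there exists v ∈ V(u₀) with ‖∇·v‖_{L∞(ℝⁿ)} < λ, then u₀ is the unique minimizer of E(·; u₀, λ) over BV(ℝⁿ); that is, E(u; u₀, λ) > E(u₀; u₀, λ) = TV_φ(u₀) for every u ∈ BV(ℝⁿ) with u ≠ u₀. -/
open MeasureTheory Filter
open scoped RealInnerProductSpace Pointwise ENNReal Topology

noncomputable section

abbrev Euc (n : ℕ) := EuclideanSpace ℝ (Fin n)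

/-- `φ` is a gauge function (Finsler metric): convex, positively 1-homogeneous,
nonnegative, vanishing exactly at 0. -/
def IsGauge {n : ℕ} (φ : Euc n → ℝ) : Prop :=
  ConvexOn ℝ Set.univ φ ∧ (∀ (α : ℝ) (y : Euc n), 0 < α → φ (α • y) = α * φ y) ∧
    (∀ y, 0 ≤ φ y) ∧ (∀ y, φ y = 0 ↔ y = 0)

/-- The Wulff shape `W_φ = {x | -x⬝y ≤ φ(y) ∀ y}`. -/
def wulff {n : ℕ} (φ : Euc n → ℝ) : Set (Euc n) :=
  {x | ∀ y, -(inner ℝ x y : ℝ) ≤ φ y}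

/-- Pointwise divergence of a vector field. -/
def vdiv {n : ℕ} (ψ : Euc n → Euc n) (x : Euc n) : ℝ :=
  ∑ i, (inner ℝ (fderiv ℝ ψ x (EuclideanSpace.single i (1 : ℝ))) (EuclideanSpace.single i (1 : ℝ)) : ℝ)

/-- The anisotropic total variation. -/
def anisoTV {n : ℕ} (φ : Euc n → ℝ) (u : Euc n → ℝ) : ℝ≥0∞ :=
  ⨆ ψ ∈ {ψ : Euc n → Euc n | ContDiff ℝ 1 ψ ∧ HasCompactSupport ψ ∧ ∀ x, ψ x ∈ -wulff φ},
    ENNReal.ofReal (-∫ x, u x * vdiv ψ x)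

/-- The anisotropic TV-L¹ energy. -/
def tvEnergy {n : ℕ} (φ : Euc n → ℝ) (f : Euc n → ℝ) (lam : ℝ) (u : Euc n → ℝ) : ℝ≥0∞ :=
  anisoTV φ u + ENNReal.ofReal (lam * ∫ x, |u x - f x|)

/-- `g` is the weak divergence of `v`. -/
def HasWeakDiv {n : ℕ} (v : Euc n → Euc n) (g : Euc n → ℝ) : Prop :=
  ∀ ψ : Euc n → ℝ, ContDiff ℝ 1 ψ → HasCompactSupport ψ →
    ∫ x, (inner ℝ (v x) (gradient ψ x) : ℝ) = -∫ x, g x * ψ x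

/-- `v` (with weak divergence `g`) belongs to the set `V(u)`. -/
def memV {n : ℕ} (φ : Euc n → ℝ) (u : Euc n → ℝ) (v : Euc n → Euc n) (g : Euc n → ℝ) : Prop :=
  MemLp v ⊤ volume ∧ (∀ᵐ x, v x ∈ -wulff φ) ∧ MemLp g ⊤ volume ∧
    HasWeakDiv v g ∧ anisoTV φ u = ENNReal.ofReal (-∫ x, u x * g x)


/-! ### Auxiliary lemmas -/

open scoped Convolution ContDiff

section aux

variable {n : ℕ}

lemma mem_neg_wulff_iff {φ : Euc n → ℝ} {x : Euc n} :
    x ∈ -wulff φ ↔ ∀ y, (inner ℝ x y : ℝ) ≤ φ y := by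
  rw [Set.mem_neg]
  constructor
  · intro h y
    have := h y
    simpa [inner_neg_left] using this
  · intro h y
    simpa [inner_neg_left] using h y

lemma neg_wulff_closed (φ : Euc n → ℝ) : IsClosed (-wulff φ) := by
  have : -wulff φ = ⋂ y, {x : Euc n | (inner ℝ x y : ℝ) ≤ φ y} := by
    ext x; simp only [mem_neg_wulff_iff, Set.mem_iInter, Set.mem_setOf_eq]
  rw [this]
  exact isClosed_iInter fun y =>
    isClosed_le (Continuous.inner continuous_id continuous_const) continuous_const

lemma neg_wulff_convex (φ : Euc n → ℝ) : Convex ℝ (-wulff φ) := by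
  intro a ha b hb s t hs ht hst
  rw [mem_neg_wulff_iff] at ha hb ⊢
  intro y
  have : (inner ℝ (s • a + t • b) y : ℝ) = s * inner ℝ a y + t * inner ℝ b y := by
    rw [inner_add_left, real_inner_smul_left, real_inner_smul_left]
  rw [this]
  calc s * (inner ℝ a y : ℝ) + t * inner ℝ b y ≤ s * φ y + t * φ y := by
        gcongr <;> [exact ha y; exact hb y]
    _ = φ y := by rw [← add_mul, hst, one_mul]

lemma zero_mem_neg_wulff {φ : Euc n → ℝ} (hφ : ∀ y, 0 ≤ φ y) : (0 : Euc n) ∈ -wulff φ := by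
  rw [mem_neg_wulff_iff]; intro y; simp [hφ y]

lemma smul_mem_neg_wulff {φ : Euc n → ℝ} (hφ : ∀ y, 0 ≤ φ y) {x : Euc n} (hx : x ∈ -wulff φ)
    {t : ℝ} (ht0 : 0 ≤ t) (ht1 : t ≤ 1) : t • x ∈ -wulff φ := by
  have := (neg_wulff_convex φ).smul_mem_of_zero_mem (zero_mem_neg_wulff hφ) hx ⟨ht0, ht1⟩
  exact this

lemma euc_decomp (z : Euc n) : ∑ i, z i • EuclideanSpace.single i (1 : ℝ) = z := by
  ext j
  rw [WithLp.ofLp_sum, Finset.sum_apply]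
  simp [EuclideanSpace.single_apply, Finset.sum_ite_eq']

lemma clm_apply_eq_sum (A : Euc n →L[ℝ] ℝ) (z : Euc n) :
    ∑ i, A (EuclideanSpace.single i (1 : ℝ)) * (inner ℝ z (EuclideanSpace.single i (1 : ℝ)) : ℝ)
      = A z := by
  conv_rhs => rw [← euc_decomp z, map_sum]
  refine Finset.sum_congr rfl fun i _ => ?_
  rw [EuclideanSpace.inner_single_right, ContinuousLinearMap.map_smul]
  simp [smul_eq_mul, starRingEnd_apply, mul_comm]

end aux

section key

variable {n : ℕ}

set_option maxHeartbeats 2000000 in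
/-- The mollification step: for a bump function `ρ`, `ofReal (-∫ u * (ρ ⋆ g)) ≤ anisoTV φ u`. -/
lemma mollify_step (φ : Euc n → ℝ) (hφ : IsGauge φ)
    (v : Euc n → Euc n) (g : Euc n → ℝ) (Cv Cg : ℝ)
    (hvm : StronglyMeasurable v) (hgm : StronglyMeasurable g)
    (hvW : ∀ x, v x ∈ -wulff φ) (hvb : ∀ x, ‖v x‖ ≤ Cv) (hgb : ∀ x, |g x| ≤ Cg)
    (hwd : HasWeakDiv v g)
    (u : Euc n → ℝ) (hu : Integrable u)
    (ρ : ContDiffBump (0 : Euc n)) :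
    ENNReal.ofReal
        (-∫ x, u x * (ρ.normed volume ⋆[ContinuousLinearMap.lsmul ℝ ℝ, volume] g) x)
      ≤ anisoTV φ u := by
  classical
  set L : Euc n →L[ℝ] ℝ →L[ℝ] Euc n := (ContinuousLinearMap.lsmul ℝ ℝ).flip with hLdef
  set ρn : Euc n → ℝ := ρ.normed volume with hρndef
  have hρc : ContDiff ℝ ∞ ρn := ρ.contDiff_normed
  have hρc1 : ContDiff ℝ 1 ρn := ρ.contDiff_normed
  have hρs : HasCompactSupport ρn := ρ.hasCompactSupport_normed
  have hρnn : ∀ y, 0 ≤ ρn y := fun y => ρ.nonneg_normed y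
  have hρint : Integrable ρn volume := ρ.integrable_normed
  have hCv0 : 0 ≤ Cv := le_trans (norm_nonneg _) (hvb 0)
  have hCg0 : 0 ≤ Cg := le_trans (abs_nonneg _) (hgb 0)
  have hvLp : MemLp v ⊤ volume :=
    memLp_top_of_bound hvm.aestronglyMeasurable Cv (Eventually.of_forall hvb)
  have hvloc : LocallyIntegrable v volume := hvLp.locallyIntegrable le_top
  have hgLp : MemLp g ⊤ volume :=
    memLp_top_of_bound hgm.aestronglyMeasurable Cg
      (Eventually.of_forall fun x => by simpa [Real.norm_eq_abs] using hgb x)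
  have hgloc : LocallyIntegrable g volume := hgLp.locallyIntegrable le_top
  set vε : Euc n → Euc n := v ⋆[L, volume] ρn with hvεdef
  set gε : Euc n → ℝ := fun x => ∫ t, g t * ρn (x - t) with hgεdef
  -- pointwise formula for `vε`
  have hvεx : ∀ x, vε x = ∫ t, ρn (x - t) • v t := by
    intro x
    rw [hvεdef]
    simp only [convolution_def, hLdef, ContinuousLinearMap.flip_apply,
      ContinuousLinearMap.lsmul_apply]
  have hint1 : ∀ x : Euc n, Integrable (fun t => ρn (x - t)) volume := by
    intro x
    have := hρint.comp_sub_left x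
    simpa using this
  -- smoothness of `vε`
  have hvεC : ContDiff ℝ 1 vε := hρs.contDiff_convolution_right L hvloc hρc1
  have hder : ∀ x, HasFDerivAt vε ((v ⋆[L.precompR (Euc n), volume] fderiv ℝ ρn) x) x :=
    hρs.hasFDerivAt_convolution_right L hvloc hρc1
  have hfρcont : Continuous (fderiv ℝ ρn) := hρc.continuous_fderiv (by simp)
  have hfρs : HasCompactSupport (fderiv ℝ ρn) := hρs.fderiv (𝕜 := ℝ)
  -- integrability of differentiated convolution integrands
  have hci : ∀ (x w : Euc n), Integrable (fun t => (fderiv ℝ ρn (x - t) w) • v t) volume := by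
    intro x w
    have hc : Continuous fun t => fderiv ℝ ρn (x - t) w :=
      (hfρcont.comp (continuous_const.sub continuous_id)).clm_apply continuous_const
    have hcs : HasCompactSupport fun t => fderiv ℝ ρn (x - t) w := by
      have h1 : HasCompactSupport fun s => fderiv ℝ ρn s w := hρs.fderiv_apply (𝕜 := ℝ) w
      exact h1.comp_homeomorph (Homeomorph.subLeft x)
    exact (hc.integrable_of_hasCompactSupport hcs).smul_of_top_left hvLp
  -- the divergence of `vε` is the mollification of `g`
  have hdiv : ∀ x, vdiv vε x = gε x := by
    intro x
    have hcoord : ∀ w : Euc n, (inner ℝ (fderiv ℝ vε x w) w : ℝ)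
        = ∫ t, (fderiv ℝ ρn (x - t) w) * (inner ℝ (v t) w : ℝ) := by
      intro w
      have h1 : fderiv ℝ vε x = (v ⋆[L.precompR (Euc n), volume] fderiv ℝ ρn) x :=
        (hder x).fderiv
      have h2 : (v ⋆[L.precompR (Euc n), volume] fderiv ℝ ρn) x w
          = (v ⋆[L, volume] fun a => fderiv ℝ ρn a w) x :=
        convolution_precompR_apply L hvloc hfρs hfρcont x w
      have h3 : (v ⋆[L, volume] fun a => fderiv ℝ ρn a w) x
          = ∫ t, (fderiv ℝ ρn (x - t) w) • v t := by
        simp only [convolution_def, hLdef, ContinuousLinearMap.flip_apply,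
          ContinuousLinearMap.lsmul_apply]
      rw [h1, h2, h3, real_inner_comm, ← integral_inner (hci x w) w]
      apply integral_congr_ae
      filter_upwards with t
      rw [real_inner_smul_right, real_inner_comm]
    have hsum : vdiv vε x = ∫ t, fderiv ℝ ρn (x - t) (v t) := by
      unfold vdiv
      rw [Finset.sum_congr rfl fun i _ => hcoord (EuclideanSpace.single i 1)]
      rw [← integral_finset_sum]
      · apply integral_congr_ae
        filter_upwards with t
        exact clm_apply_eq_sum (fderiv ℝ ρn (x - t)) (v t)
      · intro i _
        have h4 := (hci x (EuclideanSpace.single i 1)).inner_const (𝕜 := ℝ) (EuclideanSpace.single i 1)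
        apply h4.congr
        filter_upwards with t
        exact real_inner_smul_left _ _ _
    have hψc : ContDiff ℝ 1 (fun y => ρn (x - y)) :=
      hρc1.comp (contDiff_const.sub contDiff_id)
    have hψs : HasCompactSupport (fun y => ρn (x - y)) := by
      have := hρs.comp_homeomorph (Homeomorph.subLeft x)
      simpa [Function.comp_def] using this
    have hwdx := hwd _ hψc hψs
    have hptwise : ∀ t, (inner ℝ (v t) (gradient (fun y => ρn (x - y)) t) : ℝ)
        = -(fderiv ℝ ρn (x - t) (v t)) := by
      intro t
      have hsub : HasFDerivAt (fun y : Euc n => x - y)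
          (-(ContinuousLinearMap.id ℝ (Euc n))) t := by
        have h := (hasFDerivAt_const x t).sub (hasFDerivAt_id (𝕜 := ℝ) t)
        rw [zero_sub] at h
        exact h
      have hρd : HasFDerivAt ρn (fderiv ℝ ρn (x - t)) (x - t) :=
        ((hρc1.differentiable (by norm_num)) (x - t)).hasFDerivAt
      have hcomp : HasFDerivAt (fun y => ρn (x - y))
          ((fderiv ℝ ρn (x - t)).comp (-(ContinuousLinearMap.id ℝ (Euc n)))) t := by
        have := hρd.comp t hsub
        simpa [Function.comp_def] using this
      have hfd : fderiv ℝ (fun y => ρn (x - y)) t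
          = (fderiv ℝ ρn (x - t)).comp (-(ContinuousLinearMap.id ℝ (Euc n))) := hcomp.fderiv
      rw [real_inner_comm]
      simp only [gradient]
      rw [InnerProductSpace.toDual_symm_apply, hfd]
      simp
    have h5 : ∫ t, (inner ℝ (v t) (gradient (fun y => ρn (x - y)) t) : ℝ)
        = -∫ t, fderiv ℝ ρn (x - t) (v t) := by
      rw [← integral_neg]
      apply integral_congr_ae
      filter_upwards with t
      exact hptwise t
    rw [h5] at hwdx
    have h6 : ∫ t, fderiv ℝ ρn (x - t) (v t) = ∫ t, g t * ρn (x - t) := by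
      have := neg_injective hwdx
      exact this
    rw [hsum, h6, hgεdef]
  -- membership of `vε` in the negative Wulff shape
  have hvεW : ∀ x, vε x ∈ -wulff φ := by
    intro x
    have hcont : Continuous fun t => ρn (x - t) :=
      (ρ.continuous_normed).comp (continuous_const.sub continuous_id)
    have hmeas : Measurable fun t => Real.toNNReal (ρn (x - t)) :=
      measurable_real_toNNReal.comp hcont.measurable
    have hprob : IsProbabilityMeasure
        (volume.withDensity fun t => (Real.toNNReal (ρn (x - t)) : ℝ≥0∞)) := by
      constructor
      rw [withDensity_apply _ MeasurableSet.univ, setLIntegral_univ]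
      calc ∫⁻ t, (Real.toNNReal (ρn (x - t)) : ℝ≥0∞)
          = ∫⁻ t, ENNReal.ofReal (ρn (x - t)) := rfl
        _ = ENNReal.ofReal (∫ t, ρn (x - t)) :=
            (ofReal_integral_eq_lintegral_ofReal (hint1 x)
              (Eventually.of_forall fun t => hρnn _)).symm
        _ = 1 := by
            rw [integral_sub_left_eq_self ρn volume x, hρndef, ρ.integral_normed,
              ENNReal.ofReal_one]
    haveI := hprob
    have hvint : Integrable v
        (volume.withDensity fun t => (Real.toNNReal (ρn (x - t)) : ℝ≥0∞)) :=
      Integrable.mono' (integrable_const Cv) hvm.aestronglyMeasurable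
        (Eventually.of_forall hvb)
    have hmem := (neg_wulff_convex φ).integral_mem (neg_wulff_closed φ)
      (Eventually.of_forall hvW) hvint
    have heq : ∫ t, v t
          ∂(volume.withDensity fun t => (Real.toNNReal (ρn (x - t)) : ℝ≥0∞))
        = ∫ t, ρn (x - t) • v t := by
      rw [integral_withDensity_eq_integral_smul hmeas]
      apply integral_congr_ae
      filter_upwards with t
      rw [NNReal.smul_def, Real.coe_toNNReal _ (hρnn _)]
    rw [hvεx x, ← heq]
    exact hmem
  -- uniform bound on `vε`
  have hvεb : ∀ x, ‖vε x‖ ≤ Cv := by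
    intro x
    rw [hvεx x]
    have hle : ∀ᵐ t, ‖ρn (x - t) • v t‖ ≤ ρn (x - t) * Cv := by
      filter_upwards with t
      rw [norm_smul, Real.norm_eq_abs, abs_of_nonneg (hρnn _)]
      exact mul_le_mul_of_nonneg_left (hvb t) (hρnn _)
    calc ‖∫ t, ρn (x - t) • v t‖ ≤ ∫ t, ρn (x - t) * Cv :=
          norm_integral_le_of_norm_le ((hint1 x).mul_const Cv) hle
      _ = (∫ t, ρn (x - t)) * Cv := by rw [integral_mul_const]
      _ = Cv := by
          rw [integral_sub_left_eq_self ρn volume x, hρndef, ρ.integral_normed, one_mul]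
  -- properties of `gε`
  have hgεconv : gε = g ⋆[ContinuousLinearMap.mul ℝ ℝ, volume] ρn := by
    funext x
    rw [hgεdef]
    simp only [convolution_def, ContinuousLinearMap.mul_apply']
  have hgεc : Continuous gε := by
    rw [hgεconv]
    exact hρs.continuous_convolution_right _ hgloc hρc.continuous
  have hgεb : ∀ x, |gε x| ≤ Cg := by
    intro x
    rw [hgεdef, ← Real.norm_eq_abs]
    have hle : ∀ᵐ t, ‖g t * ρn (x - t)‖ ≤ ρn (x - t) * Cg := by
      filter_upwards with t
      rw [Real.norm_eq_abs, abs_mul, abs_of_nonneg (hρnn _), mul_comm]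
      exact mul_le_mul_of_nonneg_left (hgb t) (hρnn _)
    calc ‖∫ t, g t * ρn (x - t)‖ ≤ ∫ t, ρn (x - t) * Cg :=
          norm_integral_le_of_norm_le ((hint1 x).mul_const Cg) hle
      _ = (∫ t, ρn (x - t)) * Cg := by rw [integral_mul_const]
      _ = Cg := by
          rw [integral_sub_left_eq_self ρn volume x, hρndef, ρ.integral_normed, one_mul]
  -- relating the goal to `gε`
  have hswap : ∀ x, (ρn ⋆[ContinuousLinearMap.lsmul ℝ ℝ, volume] g) x = gε x := by
    intro x
    rw [convolution_eq_swap, hgεdef]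
    simp only [ContinuousLinearMap.lsmul_apply, smul_eq_mul]
    apply integral_congr_ae
    filter_upwards with t
    ring
  -- the cutoff functions
  set η₀ : ContDiffBump (0 : Euc n) := ⟨1, 2, one_pos, one_lt_two⟩ with hη₀def
  obtain ⟨C₀, hC₀⟩ :=
    ((η₀.contDiff (n := (⊤:ℕ∞))).continuous_fderiv (by simp)).bounded_above_of_compact_support
      (η₀.hasCompactSupport.fderiv (𝕜 := ℝ))
  have hC₀0 : 0 ≤ C₀ := le_trans (norm_nonneg _) (hC₀ 0)
  set a : ℕ → ℝ := fun k => ((k : ℝ) + 1)⁻¹ with hadef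
  have ha_pos : ∀ k, 0 < a k := fun k => by rw [hadef]; positivity
  have ha_le1 : ∀ k, a k ≤ 1 := fun k => by
    rw [hadef]
    apply inv_le_one_of_one_le₀
    simp
  have ha0 : Tendsto a atTop (𝓝 0) := by
    rw [hadef]
    simpa [one_div] using tendsto_one_div_add_atTop_nhds_zero_nat (𝕜 := ℝ)
  set η : ℕ → Euc n → ℝ := fun k x => η₀ (a k • x) with hηdef
  have hηC : ∀ k, ContDiff ℝ ∞ (η k) := fun k =>
    (η₀.contDiff (n := (⊤:ℕ∞))).comp (contDiff_const_smul (a k))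
  have hηd : ∀ k x, HasFDerivAt (η k)
      ((fderiv ℝ (η₀ : Euc n → ℝ) (a k • x)).comp
        ((a k) • ContinuousLinearMap.id ℝ (Euc n))) x := by
    intro k x
    have h1 : HasFDerivAt (fun y : Euc n => a k • y)
        ((a k) • ContinuousLinearMap.id ℝ (Euc n)) x := by
      have := ((a k) • ContinuousLinearMap.id ℝ (Euc n)).hasFDerivAt (x := x)
      exact this
    have h2 : HasFDerivAt (η₀ : Euc n → ℝ)
        (fderiv ℝ (η₀ : Euc n → ℝ) (a k • x)) (a k • x) :=
      (((η₀.contDiff (n := 1)).differentiable (by norm_num)) _).hasFDerivAt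
    have := h2.comp x h1
    simpa [hηdef, Function.comp_def] using this
  have hηs : ∀ k, HasCompactSupport (η k) := by
    intro k
    apply HasCompactSupport.intro (isCompact_closedBall (0 : Euc n) (2 / a k))
    intro x hx
    apply η₀.zero_of_le_dist
    have hrOut : η₀.rOut = 2 := rfl
    rw [hrOut, dist_zero_right, norm_smul, Real.norm_eq_abs, abs_of_pos (ha_pos k)]
    have hx' : 2 / a k < ‖x‖ := by
      simpa [Metric.mem_closedBall, dist_zero_right] using hx
    rw [div_lt_iff₀ (ha_pos k)] at hx'
    nlinarith [ha_pos k]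
  set Ψ : ℕ → Euc n → Euc n := fun k x => η k x • vε x with hΨdef
  have hΨC : ∀ k, ContDiff ℝ 1 (Ψ k) := fun k =>
    ((hηC k).of_le (by exact_mod_cast le_top)).smul hvεC
  have hΨs : ∀ k, HasCompactSupport (Ψ k) := fun k => (hηs k).smul_right
  have hΨW : ∀ k x, Ψ k x ∈ -wulff φ := fun k x =>
    smul_mem_neg_wulff hφ.2.2.1 (hvεW x) η₀.nonneg η₀.le_one
  have hmemS : ∀ k, Ψ k ∈ {ψ : Euc n → Euc n |
      ContDiff ℝ 1 ψ ∧ HasCompactSupport ψ ∧ ∀ x, ψ x ∈ -wulff φ} :=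
    fun k => ⟨hΨC k, hΨs k, hΨW k⟩
  -- product rule for the divergence of `Ψ k`
  have hΨdiv : ∀ k x, vdiv (Ψ k) x = η k x * gε x + fderiv ℝ (η k) x (vε x) := by
    intro k x
    have hηdiff : DifferentiableAt ℝ (η k) x := (hηd k x).differentiableAt
    have hvεdiff : DifferentiableAt ℝ vε x := (hvεC.differentiable (by norm_num)) x
    have hfd : fderiv ℝ (Ψ k) x
        = η k x • fderiv ℝ vε x + (fderiv ℝ (η k) x).smulRight (vε x) := by
      rw [hΨdef]
      exact fderiv_smul hηdiff hvεdiff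
    unfold vdiv
    rw [hfd]
    have hterm : ∀ i : Fin n,
        (inner ℝ ((η k x • fderiv ℝ vε x + (fderiv ℝ (η k) x).smulRight (vε x))
            (EuclideanSpace.single i (1:ℝ))) (EuclideanSpace.single i (1:ℝ)) : ℝ)
        = η k x * (inner ℝ (fderiv ℝ vε x (EuclideanSpace.single i (1:ℝ)))
            (EuclideanSpace.single i (1:ℝ)) : ℝ)
          + (fderiv ℝ (η k) x (EuclideanSpace.single i (1:ℝ)))
            * (inner ℝ (vε x) (EuclideanSpace.single i (1:ℝ)) : ℝ) := by
      intro i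
      rw [ContinuousLinearMap.add_apply, ContinuousLinearMap.smul_apply,
        ContinuousLinearMap.smulRight_apply, inner_add_left, real_inner_smul_left,
        real_inner_smul_left]
    rw [Finset.sum_congr rfl fun i _ => hterm i, Finset.sum_add_distrib, ← Finset.mul_sum]
    rw [clm_apply_eq_sum (fderiv ℝ (η k) x) (vε x)]
    have h7 := hdiv x
    unfold vdiv at h7
    rw [h7]
  -- bound on the cutoff derivative term
  have hηfb : ∀ k x, |fderiv ℝ (η k) x (vε x)| ≤ a k * (C₀ * Cv) := by
    intro k x
    rw [(hηd k x).fderiv, ContinuousLinearMap.comp_apply]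
    have h1 : ((a k) • ContinuousLinearMap.id ℝ (Euc n)) (vε x) = a k • vε x := rfl
    rw [h1]
    calc |fderiv ℝ (η₀ : Euc n → ℝ) (a k • x) (a k • vε x)|
        ≤ ‖fderiv ℝ (η₀ : Euc n → ℝ) (a k • x)‖ * ‖a k • vε x‖ := by
          rw [← Real.norm_eq_abs]
          exact ContinuousLinearMap.le_opNorm _ _
      _ ≤ C₀ * (a k * Cv) := by
          rw [norm_smul, Real.norm_eq_abs, abs_of_pos (ha_pos k)]
          apply mul_le_mul (hC₀ _) (mul_le_mul_of_nonneg_left (hvεb x) (ha_pos k).le)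
            (by positivity) hC₀0
      _ = a k * (C₀ * Cv) := by ring
  -- dominated convergence in `k`
  have hDCT : Tendsto (fun k => ∫ x, u x * vdiv (Ψ k) x) atTop (𝓝 (∫ x, u x * gε x)) := by
    have hrw : ∀ k, (fun x => u x * vdiv (Ψ k) x)
        = fun x => u x * (η k x * gε x + fderiv ℝ (η k) x (vε x)) :=
      fun k => funext fun x => by rw [hΨdiv k x]
    apply tendsto_integral_of_dominated_convergence (fun x => |u x| * (Cg + C₀ * Cv))
    · intro k
      rw [hrw k]
      apply hu.1.mul
      apply Continuous.aestronglyMeasurable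
      exact (((hηC k).continuous.mul hgεc).add
        ((((hηC k).continuous_fderiv (by simp)).clm_apply hvεC.continuous)))
    · exact (hu.abs.mul_const (Cg + C₀ * Cv))
    · intro k
      filter_upwards with x
      rw [hΨdiv k x]
      rw [Real.norm_eq_abs, abs_mul]
      apply mul_le_mul_of_nonneg_left _ (abs_nonneg _)
      calc |η k x * gε x + fderiv ℝ (η k) x (vε x)|
          ≤ |η k x * gε x| + |fderiv ℝ (η k) x (vε x)| := abs_add_le _ _
        _ ≤ 1 * Cg + a k * (C₀ * Cv) := by
            apply add_le_add _ (hηfb k x)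
            rw [abs_mul]
            apply mul_le_mul _ (hgεb x) (abs_nonneg _) zero_le_one
            rw [abs_of_nonneg η₀.nonneg]
            exact η₀.le_one
        _ ≤ Cg + C₀ * Cv := by
            have := ha_le1 k
            nlinarith [ha_pos k, mul_nonneg hC₀0 hCv0]
    · filter_upwards with x
      rw [show (fun k => u x * vdiv (Ψ k) x)
          = fun k => u x * (η k x * gε x + fderiv ℝ (η k) x (vε x)) from
        funext fun k => by rw [hΨdiv k x]]
      have h1 : Tendsto (fun k => η k x) atTop (𝓝 1) := by
        apply tendsto_const_nhds.congr'
        filter_upwards [eventually_ge_atTop ⌈‖x‖⌉₊] with k hk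
        symm
        apply η₀.one_of_mem_closedBall
        have hrIn : η₀.rIn = 1 := rfl
        rw [Metric.mem_closedBall, hrIn, dist_zero_right, norm_smul, Real.norm_eq_abs,
          abs_of_pos (ha_pos k)]
        have hxk : ‖x‖ ≤ (k : ℝ) + 1 := by
          calc ‖x‖ ≤ (⌈‖x‖⌉₊ : ℝ) := Nat.le_ceil _
            _ ≤ (k : ℝ) := by exact_mod_cast hk
            _ ≤ (k : ℝ) + 1 := by linarith
        calc a k * ‖x‖ ≤ a k * ((k : ℝ) + 1) :=
              mul_le_mul_of_nonneg_left hxk (ha_pos k).le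
          _ = 1 := by
              rw [hadef]
              field_simp
      have h2 : Tendsto (fun k => fderiv ℝ (η k) x (vε x)) atTop (𝓝 0) := by
        apply squeeze_zero_norm (fun k => by
          simpa [Real.norm_eq_abs] using hηfb k x)
        simpa using ha0.mul_const (C₀ * Cv)
      have h3 := ((h1.mul (tendsto_const_nhds :
        Tendsto (fun _ : ℕ => gε x) atTop (𝓝 (gε x)))).add h2).const_mul (u x)
      simpa using h3
  -- pass to the limit
  have hofreal : Tendsto (fun k => ENNReal.ofReal (-∫ x, u x * vdiv (Ψ k) x)) atTop
      (𝓝 (ENNReal.ofReal (-∫ x, u x * gε x))) :=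
    (ENNReal.continuous_ofReal.tendsto _).comp hDCT.neg
  have hle : ∀ k, ENNReal.ofReal (-∫ x, u x * vdiv (Ψ k) x) ≤ anisoTV φ u := by
    intro k
    exact le_biSup (fun ψ => ENNReal.ofReal (-∫ x, u x * vdiv ψ x)) (hmemS k)
  have hfinal := le_of_tendsto hofreal (Eventually.of_forall hle)
  have hgoal : (∫ x, u x * (ρn ⋆[ContinuousLinearMap.lsmul ℝ ℝ, volume] g) x)
      = ∫ x, u x * gε x := by
    apply integral_congr_ae
    filter_upwards with x
    rw [hswap x]
  rw [hgoal]
  exact hfinal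

/-- Key inequality: `ofReal (-∫ u g) ≤ anisoTV φ u` for nice representatives. -/
lemma key_nice (φ : Euc n → ℝ) (hφ : IsGauge φ)
    (v : Euc n → Euc n) (g : Euc n → ℝ) (Cv Cg : ℝ)
    (hvm : StronglyMeasurable v) (hgm : StronglyMeasurable g)
    (hvW : ∀ x, v x ∈ -wulff φ) (hvb : ∀ x, ‖v x‖ ≤ Cv) (hgb : ∀ x, |g x| ≤ Cg)
    (hwd : HasWeakDiv v g)
    (u : Euc n → ℝ) (hu : Integrable u) :
    ENNReal.ofReal (-∫ x, u x * g x) ≤ anisoTV φ u := by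
  have hCg0 : 0 ≤ Cg := le_trans (abs_nonneg _) (hgb 0)
  -- sequence of bump functions with radii tending to 0
  set ρ : ℕ → ContDiffBump (0 : Euc n) := fun k =>
    ⟨((k : ℝ) + 1)⁻¹, 2 * ((k : ℝ) + 1)⁻¹, by positivity,
      lt_two_mul_self (by positivity)⟩ with hρdef
  have hginf : ∀ x, ‖g x‖ ≤ Cg := fun x => by simpa [Real.norm_eq_abs] using hgb x
  have hgLp : MemLp g ⊤ volume :=
    memLp_top_of_bound hgm.aestronglyMeasurable Cg (Eventually.of_forall hginf)
  have hgloc : LocallyIntegrable g volume := hgLp.locallyIntegrable le_top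
  -- the mollified functions
  set G : ℕ → Euc n → ℝ :=
    fun k x => ((ρ k).normed volume ⋆[ContinuousLinearMap.lsmul ℝ ℝ, volume] g) x with hGdef
  -- radii tend to zero
  have hrad : Tendsto (fun k => (ρ k).rOut) atTop (𝓝 0) := by
    have h0 : Tendsto (fun k : ℕ => ((k : ℝ) + 1)⁻¹) atTop (𝓝 0) := by
      simpa [one_div] using tendsto_one_div_add_atTop_nhds_zero_nat (𝕜 := ℝ)
    have := h0.const_mul (2 : ℝ)
    simpa using this
  -- a.e. convergence of the mollifications
  have hae : ∀ᵐ x, Tendsto (fun k => G k x) atTop (𝓝 (g x)) := by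
    apply ContDiffBump.ae_convolution_tendsto_right_of_locallyIntegrable (K := 2) hrad
      ?_ hgloc
    filter_upwards with k
    simp [hρdef]
  -- uniform bound on the mollifications
  have hGb : ∀ k x, |G k x| ≤ Cg := by
    intro k x
    set ρn := (ρ k).normed volume with hρn
    have hswap : G k x = ∫ t, ρn (x - t) • g t := by
      rw [hGdef]
      exact convolution_eq_swap _
    have hρint : Integrable (fun t => ρn (x - t)) volume := by
      have h1 : Integrable ρn volume :=
        ((ρ k).integrable_normed (μ := volume))
      have := h1.comp_sub_left x
      simpa using this
    rw [hswap, ← Real.norm_eq_abs]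
    have hle : ∀ᵐ t, ‖ρn (x - t) • g t‖ ≤ ρn (x - t) * Cg := by
      filter_upwards with t
      rw [norm_smul, Real.norm_eq_abs, abs_of_nonneg ((ρ k).nonneg_normed _)]
      exact mul_le_mul_of_nonneg_left (hginf t) ((ρ k).nonneg_normed _)
    calc ‖∫ t, ρn (x - t) • g t‖ ≤ ∫ t, ρn (x - t) * Cg :=
          norm_integral_le_of_norm_le (hρint.mul_const Cg) hle
      _ = (∫ t, ρn (x - t)) * Cg := by rw [integral_mul_const]
      _ = Cg := by
          rw [integral_sub_left_eq_self ρn volume x, (ρ k).integral_normed]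
          ring
  -- continuity of the mollifications
  have hGc : ∀ k, Continuous (G k) := by
    intro k
    exact HasCompactSupport.continuous_convolution_left _
      ((ρ k).hasCompactSupport_normed) ((ρ k).continuous_normed) hgloc
  -- dominated convergence
  have hconv : Tendsto (fun k => ∫ x, u x * G k x) atTop (𝓝 (∫ x, u x * g x)) := by
    apply tendsto_integral_of_dominated_convergence (fun x => |u x| * Cg)
    · exact fun k => hu.1.mul (hGc k).aestronglyMeasurable
    · exact hu.abs.mul_const Cg
    · intro k
      filter_upwards with x
      rw [Real.norm_eq_abs, abs_mul]
      exact mul_le_mul_of_nonneg_left (hGb k x) (abs_nonneg _)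
    · filter_upwards [hae] with x hx
      exact hx.const_mul (u x)
  have hofreal : Tendsto (fun k => ENNReal.ofReal (-∫ x, u x * G k x)) atTop
      (𝓝 (ENNReal.ofReal (-∫ x, u x * g x))) :=
    (ENNReal.continuous_ofReal.tendsto _).comp hconv.neg
  refine le_of_tendsto hofreal (Eventually.of_forall fun k => ?_)
  exact mollify_step φ hφ v g Cv Cg hvm hgm hvW hvb hgb hwd u hu (ρ k)

/-- Key inequality, general form. -/
lemma key (φ : Euc n → ℝ) (hφ : IsGauge φ)
    (v : Euc n → Euc n) (g : Euc n → ℝ)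
    (hv : MemLp v ⊤ volume) (hvW : ∀ᵐ x, v x ∈ -wulff φ)
    (hg : MemLp g ⊤ volume) (hwd : HasWeakDiv v g)
    (u : Euc n → ℝ) (hu : Integrable u) :
    ENNReal.ofReal (-∫ x, u x * g x) ≤ anisoTV φ u := by
  classical
  -- bounds
  set Cv : ℝ := (eLpNorm v ⊤ volume).toReal with hCv
  set Cg : ℝ := (eLpNorm g ⊤ volume).toReal with hCg
  have hv_ne_top : eLpNorm v ⊤ volume ≠ ⊤ := hv.2.ne
  have hg_ne_top : eLpNorm g ⊤ volume ≠ ⊤ := hg.2.ne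
  have hCv0 : 0 ≤ Cv := ENNReal.toReal_nonneg
  have hCg0 : 0 ≤ Cg := ENNReal.toReal_nonneg
  have hvae : ∀ᵐ x, ‖v x‖ ≤ Cv := by
    filter_upwards [ae_le_eLpNormEssSup (f := v) (μ := volume)] with x hx
    have h2 : (‖v x‖₊ : ℝ≥0∞) ≤ eLpNorm v ⊤ volume := by rwa [eLpNorm_exponent_top]
    calc ‖v x‖ = ((‖v x‖₊ : ℝ≥0∞)).toReal := by simp
      _ ≤ Cv := ENNReal.toReal_mono hv_ne_top h2
  have hgae : ∀ᵐ x, ‖g x‖ ≤ Cg := by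
    filter_upwards [ae_le_eLpNormEssSup (f := g) (μ := volume)] with x hx
    have h2 : (‖g x‖₊ : ℝ≥0∞) ≤ eLpNorm g ⊤ volume := by rwa [eLpNorm_exponent_top]
    calc ‖g x‖ = ((‖g x‖₊ : ℝ≥0∞)).toReal := by simp
      _ ≤ Cg := ENNReal.toReal_mono hg_ne_top h2
  -- nice representative of v
  set vm : Euc n → Euc n := hv.1.mk v with hvmdef
  have hvm : StronglyMeasurable vm := hv.1.stronglyMeasurable_mk
  have hveq : v =ᵐ[volume] vm := hv.1.ae_eq_mk
  have hSmeas : MeasurableSet {x | vm x ∈ -wulff φ ∧ ‖vm x‖ ≤ Cv} := by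
    refine MeasurableSet.inter ?_ ?_
    · exact hvm.measurable ((neg_wulff_closed φ).measurableSet)
    · exact measurableSet_le hvm.measurable.norm measurable_const
  set w : Euc n → Euc n :=
    {x | vm x ∈ -wulff φ ∧ ‖vm x‖ ≤ Cv}.piecewise vm 0 with hwdef
  have hwm : StronglyMeasurable w := hvm.piecewise hSmeas stronglyMeasurable_const
  have hwW : ∀ x, w x ∈ -wulff φ := by
    intro x
    by_cases hx : x ∈ {x | vm x ∈ -wulff φ ∧ ‖vm x‖ ≤ Cv}
    · rw [hwdef, Set.piecewise_eq_of_mem _ _ _ hx]; exact hx.1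
    · rw [hwdef, Set.piecewise_eq_of_notMem _ _ _ hx]
      exact zero_mem_neg_wulff hφ.2.2.1
  have hwb : ∀ x, ‖w x‖ ≤ Cv := by
    intro x
    by_cases hx : x ∈ {x | vm x ∈ -wulff φ ∧ ‖vm x‖ ≤ Cv}
    · rw [hwdef, Set.piecewise_eq_of_mem _ _ _ hx]; exact hx.2
    · rw [hwdef, Set.piecewise_eq_of_notMem _ _ _ hx]; simpa using hCv0
  have hwv : w =ᵐ[volume] v := by
    filter_upwards [hveq, hvW, hvae] with x h1 h2 h3
    have hx : x ∈ {x | vm x ∈ -wulff φ ∧ ‖vm x‖ ≤ Cv} := by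
      constructor
      · rw [← h1]; exact h2
      · rw [← h1]; exact h3
    rw [hwdef, Set.piecewise_eq_of_mem _ _ _ hx, ← h1]
  -- nice representative of g
  set gm : Euc n → ℝ := hg.1.mk g with hgmdef
  have hgm : StronglyMeasurable gm := hg.1.stronglyMeasurable_mk
  have hgeq : g =ᵐ[volume] gm := hg.1.ae_eq_mk
  have hTmeas : MeasurableSet {x | ‖gm x‖ ≤ Cg} :=
    measurableSet_le hgm.measurable.norm measurable_const
  set h : Euc n → ℝ := {x | ‖gm x‖ ≤ Cg}.piecewise gm 0 with hhdef
  have hhm : StronglyMeasurable h := hgm.piecewise hTmeas stronglyMeasurable_const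
  have hhb : ∀ x, |h x| ≤ Cg := by
    intro x
    by_cases hx : x ∈ {x | ‖gm x‖ ≤ Cg}
    · rw [hhdef, Set.piecewise_eq_of_mem _ _ _ hx]
      simpa [Real.norm_eq_abs] using hx
    · rw [hhdef, Set.piecewise_eq_of_notMem _ _ _ hx]; simpa using hCg0
  have hhg : h =ᵐ[volume] g := by
    filter_upwards [hgeq, hgae] with x h1 h2
    have hx : x ∈ {x | ‖gm x‖ ≤ Cg} := by rw [Set.mem_setOf_eq, ← h1]; exact h2
    rw [hhdef, Set.piecewise_eq_of_mem _ _ _ hx, ← h1]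
  -- weak divergence transfers
  have hwd' : HasWeakDiv w h := by
    intro ψ hc hcs
    have e1 : ∫ x, (inner ℝ (w x) (gradient ψ x) : ℝ) = ∫ x, (inner ℝ (v x) (gradient ψ x) : ℝ) := by
      apply integral_congr_ae
      filter_upwards [hwv] with x hx
      rw [hx]
    have e2 : ∫ x, h x * ψ x = ∫ x, g x * ψ x := by
      apply integral_congr_ae
      filter_upwards [hhg] with x hx
      rw [hx]
    rw [e1, e2]
    exact hwd ψ hc hcs
  have hmain := key_nice φ hφ w h Cv Cg hwm hhm hwW hwb hhb hwd' u hu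
  have e3 : ∫ x, u x * h x = ∫ x, u x * g x := by
    apply integral_congr_ae
    filter_upwards [hhg] with x hx
    rw [hx]
  rwa [e3] at hmain

end key

/-- strict faithfulness implies uniqueness: if some `v ∈ V(u₀)` has
`‖∇·v‖_∞ < λ`, then `u₀` is the unique minimizer of `E(·; u₀, λ)`:
`E(u; u₀, λ) > E(u₀; u₀, λ) = TV_φ(u₀)` for every `u ≠ u₀`. -/
theorem stmt_17 {n : ℕ} (hn : 1 ≤ n) (φ : Euc n → ℝ) (hφ : IsGauge φ)
    (lam : ℝ) (hlam : 0 < lam)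
    (u₀ : Euc n → ℝ) (hu₀ : Integrable u₀) (htv : anisoTV φ u₀ < ⊤)
    (v : Euc n → Euc n) (g : Euc n → ℝ) (hV : memV φ u₀ v g)
    (hs : eLpNorm g ⊤ volume < ENNReal.ofReal lam) :
    tvEnergy φ u₀ lam u₀ = anisoTV φ u₀ ∧
      ∀ u : Euc n → ℝ, Integrable u → anisoTV φ u < ⊤ → ¬ (u =ᵐ[volume] u₀) →
        tvEnergy φ u₀ lam u₀ < tvEnergy φ u₀ lam u := by
  obtain ⟨hvLp, hvW, hgLp, hwd, htveq⟩ := hV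
  have h1 : tvEnergy φ u₀ lam u₀ = anisoTV φ u₀ := by
    unfold tvEnergy
    simp
  refine ⟨h1, fun u hu hutv hne => ?_⟩
  rw [h1]
  -- the L¹ distance is positive
  set d : ℝ := ∫ x, |u x - u₀ x| with hd
  have hd_int : Integrable (fun x => |u x - u₀ x|) := (hu.sub hu₀).abs
  have hd_pos : 0 < d := by
    rcases lt_or_eq_of_le (integral_nonneg (fun x => abs_nonneg _) :
        (0:ℝ) ≤ ∫ x, |u x - u₀ x|) with h | h
    · exact h
    · exfalso
      apply hne
      have := (integral_eq_zero_iff_of_nonneg (fun x => abs_nonneg (u x - u₀ x)) hd_int).1 h.symm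
      filter_upwards [this] with x hx
      have : |u x - u₀ x| = 0 := hx
      have : u x - u₀ x = 0 := abs_eq_zero.1 this
      linarith
  -- essential bound on g
  set b : ℝ := (eLpNorm g ⊤ volume).toReal with hb
  have hg_ne_top : eLpNorm g ⊤ volume ≠ ⊤ := hgLp.2.ne
  have hb_lt : b < lam := by
    have := ENNReal.toReal_lt_toReal hg_ne_top (ENNReal.ofReal_ne_top) |>.2 hs
    rwa [ENNReal.toReal_ofReal hlam.le] at this
  have hb_nonneg : 0 ≤ b := ENNReal.toReal_nonneg
  have hgae : ∀ᵐ x, |g x| ≤ b := by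
    have h := ae_le_eLpNormEssSup (f := g) (μ := volume)
    filter_upwards [h] with x hx
    have : (‖g x‖₊ : ℝ≥0∞) ≤ eLpNorm g ⊤ volume := by
      rwa [eLpNorm_exponent_top]
    calc |g x| = ((‖g x‖₊ : ℝ≥0∞)).toReal := by simp [Real.norm_eq_abs]
      _ ≤ b := ENNReal.toReal_mono hg_ne_top this
  -- integrability of products with g
  have hug_int : Integrable (fun x => u x * g x) := by
    have h := hu.bdd_mul (c := b) hgLp.1 (by
      filter_upwards [hgae] with x hx
      simpa [Real.norm_eq_abs] using hx)
    exact h.congr (by filter_upwards with x; ring)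
  have hu₀g_int : Integrable (fun x => u₀ x * g x) := by
    have h := hu₀.bdd_mul (c := b) hgLp.1 (by
      filter_upwards [hgae] with x hx
      simpa [Real.norm_eq_abs] using hx)
    exact h.congr (by filter_upwards with x; ring)
  -- key inequality for u
  have hkey : ENNReal.ofReal (-∫ x, u x * g x) ≤ anisoTV φ u :=
    key φ hφ v g hvLp hvW hgLp hwd u hu
  have hA_ne_top : anisoTV φ u ≠ ⊤ := hutv.ne
  set A : ℝ := (anisoTV φ u).toReal with hA
  have hA_nonneg : 0 ≤ A := ENNReal.toReal_nonneg
  have hkey' : -∫ x, u x * g x ≤ A :=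
    (ENNReal.ofReal_le_iff_le_toReal hA_ne_top).1 hkey
  -- difference estimate
  have hdiff : |∫ x, (u x - u₀ x) * g x| ≤ b * d := by
    have heq : (fun x => (u x - u₀ x) * g x) = fun x => u x * g x - u₀ x * g x := by
      funext x; ring
    have h4 : Integrable (fun x => (u x - u₀ x) * g x) := by
      rw [heq]; exact hug_int.sub hu₀g_int
    have hint3 : Integrable (fun x => |u x - u₀ x| * |g x|) := by
      have heq2 : (fun x => |u x - u₀ x| * |g x|) = fun x => |(u x - u₀ x) * g x| :=
        funext fun x => (abs_mul _ _).symm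
      rw [heq2]; exact h4.abs
    have h1 : |∫ x, (u x - u₀ x) * g x| ≤ ∫ x, |u x - u₀ x| * |g x| := by
      simpa [Real.norm_eq_abs, abs_mul] using
        norm_integral_le_integral_norm (μ := volume) (fun x => (u x - u₀ x) * g x)
    have h2 : ∫ x, |u x - u₀ x| * |g x| ≤ ∫ x, b * |u x - u₀ x| := by
      apply integral_mono_ae hint3 (hd_int.const_mul b)
      filter_upwards [hgae] with x hx
      calc |u x - u₀ x| * |g x| ≤ |u x - u₀ x| * b :=
            mul_le_mul_of_nonneg_left hx (abs_nonneg _)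
        _ = b * |u x - u₀ x| := mul_comm _ _
    calc |∫ x, (u x - u₀ x) * g x| ≤ ∫ x, |u x - u₀ x| * |g x| := h1
      _ ≤ ∫ x, b * |u x - u₀ x| := h2
      _ = b * d := by rw [integral_const_mul]
  have hsplit : ∫ x, (u x - u₀ x) * g x = (∫ x, u x * g x) - ∫ x, u₀ x * g x := by
    have heq : (fun x => (u x - u₀ x) * g x) = fun x => u x * g x - u₀ x * g x := by
      funext x; ring
    rw [heq, integral_sub hug_int hu₀g_int]
  -- conclude
  have hstep : -∫ x, u₀ x * g x < A + lam * d := by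
    have h3 : -∫ x, u₀ x * g x = (-∫ x, u x * g x) + ∫ x, (u x - u₀ x) * g x := by
      rw [hsplit]; ring
    have h4 : ∫ x, (u x - u₀ x) * g x ≤ b * d := (abs_le.1 hdiff).2
    have h5 : b * d < lam * d := by
      exact mul_lt_mul_of_pos_right hb_lt hd_pos
    linarith
  rw [htveq]
  unfold tvEnergy
  have hgoal : ENNReal.ofReal (-∫ x, u₀ x * g x) < ENNReal.ofReal (A + lam * d) := by
    apply (ENNReal.ofReal_lt_ofReal_iff ?_).2 hstep
    positivity
  calc ENNReal.ofReal (-∫ x, u₀ x * g x) < ENNReal.ofReal (A + lam * d) := hgoal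
    _ = ENNReal.ofReal A + ENNReal.ofReal (lam * d) := by
        rw [ENNReal.ofReal_add hA_nonneg (by positivity)]
    _ = anisoTV φ u + ENNReal.ofReal (lam * d) := by
        rw [hA, ENNReal.ofReal_toReal hA_ne_top]

end
end

section
/- Idempotency of the minimization: let f ∈ L¹(ℝⁿ) and λ > 0. If u₀ ∈ BV(ℝⁿ) is a minimizer of E(·; f, λ) over BV(ℝⁿ), then u₀ is also a minimizer of E(·; u₀, λ) over BV(ℝⁿ). -/
open MeasureTheory Filter
open scoped RealInnerProductSpace Pointwise ENNReal Topology

noncomputable section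

/-- idempotency: a minimizer of `E(·; f, λ)` also minimizes `E(·; u₀, λ)`. -/
theorem stmt_18 {n : ℕ} (hn : 1 ≤ n) (φ : Euc n → ℝ) (hφ : IsGauge φ)
    (f : Euc n → ℝ) (hf : Integrable f) (lam : ℝ) (hlam : 0 < lam)
    (u₀ : Euc n → ℝ) (hu₀ : Integrable u₀) (htv : anisoTV φ u₀ < ⊤)
    (hmin : ∀ w : Euc n → ℝ, Integrable w → anisoTV φ w < ⊤ →
      tvEnergy φ f lam u₀ ≤ tvEnergy φ f lam w) :
    ∀ w : Euc n → ℝ, Integrable w → anisoTV φ w < ⊤ →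
      tvEnergy φ u₀ lam u₀ ≤ tvEnergy φ u₀ lam w := by
  intro w hw hwtv
  have h1 := hmin w hw hwtv
  have hA : Integrable (fun x => |w x - u₀ x|) := (hw.sub hu₀).abs
  have hB : Integrable (fun x => |u₀ x - f x|) := (hu₀.sub hf).abs
  have hC : Integrable (fun x => |w x - f x|) := (hw.sub hf).abs
  have hAnn : 0 ≤ ∫ x, |w x - u₀ x| := integral_nonneg fun x => abs_nonneg _
  have hBnn : 0 ≤ ∫ x, |u₀ x - f x| := integral_nonneg fun x => abs_nonneg _
  have htri : (∫ x, |w x - f x|) ≤ (∫ x, |w x - u₀ x|) + ∫ x, |u₀ x - f x| := by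
    rw [← integral_add hA hB]
    exact integral_mono hC (hA.add hB) fun x => by
      simpa using abs_sub_le (w x) (u₀ x) (f x)
  have hsplit : ENNReal.ofReal (lam * ∫ x, |w x - f x|) ≤
      ENNReal.ofReal (lam * ∫ x, |w x - u₀ x|) + ENNReal.ofReal (lam * ∫ x, |u₀ x - f x|) := by
    rw [← ENNReal.ofReal_add (by positivity) (by positivity)]
    apply ENNReal.ofReal_le_ofReal
    rw [← mul_add]
    exact mul_le_mul_of_nonneg_left htri hlam.le
  have hkey : anisoTV φ u₀ ≤ anisoTV φ w + ENNReal.ofReal (lam * ∫ x, |w x - u₀ x|) := by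
    have h2 : anisoTV φ u₀ + ENNReal.ofReal (lam * ∫ x, |u₀ x - f x|) ≤
        (anisoTV φ w + ENNReal.ofReal (lam * ∫ x, |w x - u₀ x|)) +
          ENNReal.ofReal (lam * ∫ x, |u₀ x - f x|) := by
      refine h1.trans ?_
      unfold tvEnergy
      rw [add_assoc]
      exact add_le_add le_rfl hsplit
    exact (ENNReal.add_le_add_iff_right ENNReal.ofReal_ne_top).mp h2
  unfold tvEnergy
  simpa using hkey

end
end
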